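/- arXiv:2310.15341 — 5 statements merged into one kernel-verified Lean document; each statement's English description precedes it below -/
import Mathlib

section
/- Let A, M₁, …, M_k, L be n×n real matrices such that A ≤ M₁M₂⋯M_k L entrywise, each M₁, …, M_k is a nonsingular M-matrix, and the off-diagonal part of L is nonpositive (L_a ≤ 0). Assume there exists a nonzero vector e ≥ 0 with Ae ≥ 0 such that at least one of the matrices M₁, …, M_k, L connects N⁰(Ae) with N⁺(Ae). Then M_k⁻¹M_{k−1}⁻¹⋯M₁⁻¹A is a nonsingular M-matrix; in particular A is invertible and A⁻¹ ≥ 0 entrywise. -/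
open Matrix

/-- A real square matrix is a nonsingular M-matrix if its off-diagonal entries are
nonpositive, it is invertible, and all entries of its inverse are nonnegative. -/
def IsNonsingMMatrix {n : ℕ} (M : Matrix (Fin n) (Fin n) ℝ) : Prop :=
  (∀ i j, i ≠ j → M i j ≤ 0) ∧ IsUnit M.det ∧ ∀ i j, 0 ≤ M⁻¹ i j

/-- `A` connects `N1` with `N2`: from every index in `N1` there is a path of
nonzero entries of `A` of length `r ≥ 1` ending in `N2`. -/
def Connects {n : ℕ} (A : Matrix (Fin n) (Fin n) ℝ) (N1 N2 : Set (Fin n)) : Prop :=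
  ∀ i0 ∈ N1, ∃ r : ℕ, 1 ≤ r ∧ ∃ path : ℕ → Fin n, path 0 = i0 ∧ path r ∈ N2 ∧
    ∀ k, 1 ≤ k → k ≤ r → A (path (k - 1)) (path k) ≠ 0

/-- `N⁰(v)`, the set of indices where `v` vanishes. -/
def Nzero {n : ℕ} (v : Fin n → ℝ) : Set (Fin n) := {i | v i = 0}

/-- `N⁺(v)`, the set of indices where `v` is positive. -/
def Npos {n : ℕ} (v : Fin n → ℝ) : Set (Fin n) := {i | 0 < v i}

/-- Diagonal part `A_d` of a matrix. -/
noncomputable def diagPart {n : ℕ} (A : Matrix (Fin n) (Fin n) ℝ) : Matrix (Fin n) (Fin n) ℝ :=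
  Matrix.diagonal fun i => A i i

/-- Positive off-diagonal part `A_a⁺` of a matrix. -/
noncomputable def offDiagPos {n : ℕ} (A : Matrix (Fin n) (Fin n) ℝ) : Matrix (Fin n) (Fin n) ℝ :=
  Matrix.of fun i j => if i ≠ j ∧ 0 < A i j then A i j else 0

/-- Negative off-diagonal part `A_a⁻ = A - A_d - A_a⁺` of a matrix. -/
noncomputable def offDiagNeg {n : ℕ} (A : Matrix (Fin n) (Fin n) ℝ) : Matrix (Fin n) (Fin n) ℝ :=
  (A - diagPart A) - offDiagPos A

/-!
Write `P = M₁ ⋯ M_k` and `B = P⁻¹ A`. Since `P⁻¹ ≥ 0`, `B ≤ P⁻¹ P L = L`, so `B` is a Z-matrix,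
and `B e = P⁻¹ (A e) ≥ 0`. For a Z-matrix `B` and `x ≥ 0` with `B x ≥ 0`, the zero set of `x` lies in
`N⁰(B x)` and is closed under the off-diagonal graph of `B`; hence, if a matrix whose off-diagonal
pattern is contained in that of `B` (here `L`) connects `N⁰(B x)` with `N⁺(B x)`, then `x > 0`.
Applied first to `e` and then to `c + t e` for `c` with `B c ≥ 0` and the least admissible `t`, this
shows that `B c ≥ 0` forces `c ≥ 0`, which makes `B` a nonsingular M-matrix. If instead some `Mᵢ`
connects, the same argument for `Mᵢ` gives `P⁻¹ (A e) > 0`, and connectivity holds vacuously.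
-/

section MatrixOrder

variable {m ι : Type*} [Fintype ι]

theorem mulVec_nonneg_of_nonneg {A : Matrix m ι ℝ} {v : ι → ℝ}
    (hA : ∀ i j, 0 ≤ A i j) (hv : 0 ≤ v) : 0 ≤ A *ᵥ v :=
  fun i => Finset.sum_nonneg fun j _ => mul_nonneg (hA i j) (hv j)

theorem mul_apply_nonneg {C : Matrix m ι ℝ} {D : Matrix ι ι ℝ}
    (hC : ∀ i j, 0 ≤ C i j) (hD : ∀ i j, 0 ≤ D i j) (i : m) (j : ι) : 0 ≤ (C * D) i j :=
  Finset.sum_nonneg fun l _ => mul_nonneg (hC i l) (hD l j)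

theorem mul_apply_le_mul_apply_of_nonneg {C : Matrix m ι ℝ} {X Y : Matrix ι ι ℝ}
    (hC : ∀ i j, 0 ≤ C i j) (h : ∀ i j, X i j ≤ Y i j) (i : m) (j : ι) :
    (C * X) i j ≤ (C * Y) i j :=
  Finset.sum_le_sum fun l _ => mul_le_mul_of_nonneg_left (h l j) (hC i l)

end MatrixOrder

section MMatrix

variable {n : ℕ}

def IsZMatrix (B : Matrix (Fin n) (Fin n) ℝ) : Prop :=
  ∀ i j, i ≠ j → B i j ≤ 0

theorem Connects.mono {A : Matrix (Fin n) (Fin n) ℝ} {N₁ N₂ N₁' N₂' : Set (Fin n)}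
    (h : Connects A N₁ N₂) (h₁ : N₁' ⊆ N₁) (h₂ : N₂ ⊆ N₂') : Connects A N₁' N₂' := by
  intro i hi
  obtain ⟨r, hr, path, h0, hend, hstep⟩ := h i (h₁ hi)
  exact ⟨r, hr, path, h0, h₂ hend, hstep⟩

theorem Connects.eq_empty_of_closed {A : Matrix (Fin n) (Fin n) ℝ} {N₁ N₂ S : Set (Fin n)}
    (h : Connects A N₁ N₂) (hS₁ : S ⊆ N₁) (hS₂ : Disjoint S N₂)
    (hS : ∀ i ∈ S, ∀ j, i ≠ j → A i j ≠ 0 → j ∈ S) : S = ∅ := by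
  refine Set.eq_empty_of_forall_notMem fun i hi => ?_
  obtain ⟨r, -, path, h0, hend, hstep⟩ := h i (hS₁ hi)
  have hpath : ∀ k ≤ r, path k ∈ S := by
    intro k
    induction k with
    | zero => exact fun _ => h0 ▸ hi
    | succ k ih =>
      intro hk
      by_cases heq : path k = path (k + 1)
      · exact heq ▸ ih (by omega)
      · exact hS _ (ih (by omega)) _ heq (by simpa using hstep (k + 1) (by omega) hk)
  exact Set.disjoint_left.1 hS₂ (hpath r le_rfl) hend

theorem nzero_subset_nzero_of_npos_subset {v w : Fin n → ℝ} (hv : 0 ≤ v)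
    (h : Npos v ⊆ Npos w) : Nzero w ⊆ Nzero v := by
  intro i hw
  by_contra hvi
  exact (h (lt_of_le_of_ne (hv i) (Ne.symm hvi)) : 0 < w i).ne' hw

namespace IsZMatrix

variable {A B : Matrix (Fin n) (Fin n) ℝ} {x : Fin n → ℝ}

theorem mul_nonpos_of_eq_zero (hB : IsZMatrix B) (hx : 0 ≤ x) {i : Fin n} (hi : x i = 0)
    (j : Fin n) : B i j * x j ≤ 0 := by
  rcases eq_or_ne i j with rfl | hij
  · simp [hi]
  · exact mul_nonpos_of_nonpos_of_nonneg (hB i j hij) (hx j)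

theorem mulVec_nonpos_of_eq_zero (hB : IsZMatrix B) (hx : 0 ≤ x) {i : Fin n} (hi : x i = 0) :
    (B *ᵥ x) i ≤ 0 :=
  show ∑ j, B i j * x j ≤ 0 from Finset.sum_nonpos fun j _ => hB.mul_nonpos_of_eq_zero hx hi j

theorem pos_of_connects (hB : IsZMatrix B) (hAB : ∀ i j, i ≠ j → A i j ≠ 0 → B i j ≠ 0)
    (hx : 0 ≤ x) (hBx : 0 ≤ B *ᵥ x) (hc : Connects A (Nzero (B *ᵥ x)) (Npos (B *ᵥ x)))
    (i : Fin n) : 0 < x i := by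
  have hzero : ∀ i, x i = 0 → (B *ᵥ x) i = 0 ∧ ∀ j, B i j * x j = 0 := fun i hi => by
    have hsum : (B *ᵥ x) i = 0 := le_antisymm (hB.mulVec_nonpos_of_eq_zero hx hi) (hBx i)
    refine ⟨hsum, fun j => ?_⟩
    exact (Finset.sum_eq_zero_iff_of_nonpos (s := Finset.univ) (f := fun j => B i j * x j)
      fun j _ => hB.mul_nonpos_of_eq_zero hx hi j).1 hsum j (Finset.mem_univ j)
  have hempty : Nzero x = ∅ := by
    refine hc.eq_empty_of_closed (fun i hi => (hzero i hi).1) ?_ ?_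
    · exact Set.disjoint_left.2 fun i hi hpos => (hpos : 0 < (B *ᵥ x) i).ne' (hzero i hi).1
    · intro i hi j hij hA
      exact (mul_eq_zero.1 ((hzero i hi).2 j)).resolve_left (hAB i j hij hA)
  exact lt_of_le_of_ne (hx i) fun h => (Set.eq_empty_iff_forall_notMem.1 hempty) i h.symm

theorem nonneg_of_mulVec_nonneg (hB : IsZMatrix B) (hAB : ∀ i j, i ≠ j → A i j ≠ 0 → B i j ≠ 0)
    {e : Fin n → ℝ} (he : ∀ i, 0 < e i) (hBe : 0 ≤ B *ᵥ e)
    (hc : Connects A (Nzero (B *ᵥ e)) (Npos (B *ᵥ e))) {c : Fin n → ℝ} (hBc : 0 ≤ B *ᵥ c) :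
    0 ≤ c := by
  by_contra hneg
  obtain ⟨i₁, hi₁⟩ : ∃ i, c i < 0 := by simpa [Pi.le_def] using hneg
  obtain ⟨i₀, -, hmax⟩ :=
    Finset.exists_max_image Finset.univ (fun i => -c i / e i) ⟨i₁, Finset.mem_univ _⟩
  set t := -c i₀ / e i₀
  have ht : 0 < t := (div_pos (neg_pos.2 hi₁) (he i₁)).trans_le (hmax i₁ (Finset.mem_univ _))
  have hx : 0 ≤ c + t • e := fun i => by
    have := (div_le_iff₀ (he i)).1 (hmax i (Finset.mem_univ _))
    simp only [Pi.add_apply, Pi.smul_apply, smul_eq_mul, Pi.zero_apply]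
    linarith
  have hx₀ : (c + t • e) i₀ = 0 := by
    simp only [Pi.add_apply, Pi.smul_apply, smul_eq_mul, t]
    field_simp [(he i₀).ne']
    ring
  have hBx : B *ᵥ (c + t • e) = B *ᵥ c + t • B *ᵥ e := by
    rw [mulVec_add, mulVec_smul]
  have hzero : Nzero (B *ᵥ (c + t • e)) ⊆ Nzero (B *ᵥ e) := fun i hi => by
    have hi : (B *ᵥ c) i + t * (B *ᵥ e) i = 0 := by simpa [Nzero, hBx] using hi
    have hc_nonneg : 0 ≤ (B *ᵥ c) i := hBc i
    have he_nonneg : 0 ≤ t * (B *ᵥ e) i := mul_nonneg ht.le (hBe i)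
    exact (mul_eq_zero.1 (by linarith)).resolve_left ht.ne'
  have hpos : Npos (B *ᵥ e) ⊆ Npos (B *ᵥ (c + t • e)) := fun i hi => by
    show 0 < (B *ᵥ (c + t • e)) i
    rw [hBx]
    exact add_pos_of_nonneg_of_pos (hBc i) (mul_pos ht hi)
  have hBx_nonneg : 0 ≤ B *ᵥ (c + t • e) := by
    rw [hBx]
    exact add_nonneg hBc (smul_nonneg ht.le hBe)
  exact (hB.pos_of_connects hAB hx hBx_nonneg (hc.mono hzero hpos) i₀).ne' hx₀

theorem isNonsingMMatrix_of_monotone (hB : IsZMatrix B)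
    (hmono : ∀ c, 0 ≤ B *ᵥ c → 0 ≤ c) : IsNonsingMMatrix B := by
  have hdet : IsUnit B.det := by
    refine isUnit_iff_ne_zero.2 fun h0 => ?_
    obtain ⟨v, hv0, hv⟩ := exists_mulVec_eq_zero_iff.2 h0
    have hneg : 0 ≤ -v := hmono (-v) (by rw [mulVec_neg, hv, neg_zero])
    exact hv0 (le_antisymm (neg_nonneg.1 hneg) (hmono v hv.ge))
  refine ⟨hB, hdet, fun i j => ?_⟩
  have hcol : B *ᵥ (B⁻¹ *ᵥ Pi.single j 1) = Pi.single j 1 := by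
    rw [mulVec_mulVec, mul_nonsing_inv _ hdet, one_mulVec]
  have := hmono _ (hcol ▸ Pi.single_nonneg.2 zero_le_one) i
  rwa [mulVec_single_one] at this

theorem isNonsingMMatrix_of_connects (hB : IsZMatrix B)
    (hAB : ∀ i j, i ≠ j → A i j ≠ 0 → B i j ≠ 0) {e : Fin n → ℝ} (he : 0 ≤ e)
    (hBe : 0 ≤ B *ᵥ e) (hc : Connects A (Nzero (B *ᵥ e)) (Npos (B *ᵥ e))) :
    IsNonsingMMatrix B :=
  hB.isNonsingMMatrix_of_monotone fun _ =>
    hB.nonneg_of_mulVec_nonneg hAB (hB.pos_of_connects hAB he hBe hc) hBe hc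

end IsZMatrix

namespace IsNonsingMMatrix

variable {M : Matrix (Fin n) (Fin n) ℝ} {v : Fin n → ℝ}

theorem isZMatrix (h : IsNonsingMMatrix M) : IsZMatrix M := h.1

theorem mulVec_inv_mulVec (h : IsNonsingMMatrix M) (v : Fin n → ℝ) : M *ᵥ (M⁻¹ *ᵥ v) = v := by
  rw [mulVec_mulVec, mul_nonsing_inv _ h.2.1, one_mulVec]

theorem inv_mulVec_nonneg (h : IsNonsingMMatrix M) (hv : 0 ≤ v) : 0 ≤ M⁻¹ *ᵥ v :=
  mulVec_nonneg_of_nonneg h.2.2 hv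

theorem npos_subset_npos_inv_mulVec (h : IsNonsingMMatrix M) (hv : 0 ≤ v) :
    Npos v ⊆ Npos (M⁻¹ *ᵥ v) := by
  intro i hi
  by_contra hz
  have hz : (M⁻¹ *ᵥ v) i = 0 := le_antisymm (not_lt.1 hz) (h.inv_mulVec_nonneg hv i)
  have := h.isZMatrix.mulVec_nonpos_of_eq_zero (h.inv_mulVec_nonneg hv) hz
  rw [h.mulVec_inv_mulVec] at this
  exact (hi : 0 < v i).not_ge this

theorem inv_mulVec_pos_of_connects (h : IsNonsingMMatrix M) (hv : 0 ≤ v)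
    (hc : Connects M (Nzero v) (Npos v)) (i : Fin n) : 0 < (M⁻¹ *ᵥ v) i :=
  h.isZMatrix.pos_of_connects (fun _ _ _ => id) (h.inv_mulVec_nonneg hv)
    (by rwa [h.mulVec_inv_mulVec]) (by rwa [h.mulVec_inv_mulVec]) i

end IsNonsingMMatrix

section ListProd

variable {l : List (Matrix (Fin n) (Fin n) ℝ)} {v : Fin n → ℝ}

theorem list_prod_cons_inv_mulVec (C : Matrix (Fin n) (Fin n) ℝ)
    (l : List (Matrix (Fin n) (Fin n) ℝ)) (v : Fin n → ℝ) :
    (C :: l).prod⁻¹ *ᵥ v = l.prod⁻¹ *ᵥ (C⁻¹ *ᵥ v) := by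
  rw [List.prod_cons, Matrix.mul_inv_rev, mulVec_mulVec]

theorem isUnit_det_list_prod (hl : ∀ C ∈ l, IsNonsingMMatrix C) : IsUnit l.prod.det :=
  (isUnit_iff_isUnit_det _).1 <|
    List.prod_isUnit fun C hC => (isUnit_iff_isUnit_det _).2 (hl C hC).2.1

theorem list_prod_inv_mulVec_nonneg (hl : ∀ C ∈ l, IsNonsingMMatrix C) (hv : 0 ≤ v) :
    0 ≤ l.prod⁻¹ *ᵥ v := by
  induction l generalizing v with
  | nil => simpa using hv
  | cons C l ih =>
    rw [list_prod_cons_inv_mulVec]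
    exact ih (fun D hD => hl D (List.mem_cons_of_mem C hD))
      ((hl C List.mem_cons_self).inv_mulVec_nonneg hv)

theorem list_prod_inv_nonneg (hl : ∀ C ∈ l, IsNonsingMMatrix C) (i j : Fin n) :
    0 ≤ l.prod⁻¹ i j := by
  have := list_prod_inv_mulVec_nonneg hl (v := Pi.single j 1) (Pi.single_nonneg.2 zero_le_one) i
  rwa [mulVec_single_one] at this

theorem npos_subset_npos_list_prod_inv_mulVec (hl : ∀ C ∈ l, IsNonsingMMatrix C)
    (hv : 0 ≤ v) : Npos v ⊆ Npos (l.prod⁻¹ *ᵥ v) := by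
  induction l generalizing v with
  | nil => simp
  | cons C l ih =>
    have hC := hl C List.mem_cons_self
    rw [list_prod_cons_inv_mulVec]
    exact (hC.npos_subset_npos_inv_mulVec hv).trans
      (ih (fun D hD => hl D (List.mem_cons_of_mem C hD)) (hC.inv_mulVec_nonneg hv))

/-- Connectivity with respect to `v` passes to `C⁻¹ *ᵥ v`, whose zero set is smaller and whose
positive set is larger. -/
theorem list_prod_inv_mulVec_pos_of_connects (hl : ∀ C ∈ l, IsNonsingMMatrix C) (hv : 0 ≤ v)
    (hc : ∃ C ∈ l, Connects C (Nzero v) (Npos v)) (i : Fin n) :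
    0 < (l.prod⁻¹ *ᵥ v) i := by
  induction l generalizing v with
  | nil => simp at hc
  | cons C l ih =>
    have hC := hl C List.mem_cons_self
    have hl' : ∀ D ∈ l, IsNonsingMMatrix D := fun D hD => hl D (List.mem_cons_of_mem C hD)
    have hu := hC.inv_mulVec_nonneg hv
    have hsub := hC.npos_subset_npos_inv_mulVec hv
    rw [list_prod_cons_inv_mulVec]
    obtain ⟨D, hD, hDc⟩ := hc
    rcases List.mem_cons.1 hD with rfl | hD
    · exact npos_subset_npos_list_prod_inv_mulVec hl' hu
        (hC.inv_mulVec_pos_of_connects hv hDc i)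
    · exact ih hl' hu
        ⟨D, hD, hDc.mono (nzero_subset_nzero_of_npos_subset hv hsub) hsub⟩

theorem list_prod_inv_mul_le {A L : Matrix (Fin n) (Fin n) ℝ}
    (hl : ∀ C ∈ l, IsNonsingMMatrix C) (hle : ∀ i j, A i j ≤ (l.prod * L) i j) (i j : Fin n) :
    (l.prod⁻¹ * A) i j ≤ L i j := by
  have := mul_apply_le_mul_apply_of_nonneg (list_prod_inv_nonneg hl) hle i j
  rwa [← Matrix.mul_assoc, nonsing_inv_mul _ (isUnit_det_list_prod hl), Matrix.one_mul] at this

theorem isNonsingMMatrix_list_prod_inv_mul_of_connects_factor {A : Matrix (Fin n) (Fin n) ℝ}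
    (hl : ∀ C ∈ l, IsNonsingMMatrix C) (hZ : IsZMatrix (l.prod⁻¹ * A)) {e : Fin n → ℝ}
    (he : 0 ≤ e) (hAe : 0 ≤ A *ᵥ e) (hc : ∃ C ∈ l, Connects C (Nzero (A *ᵥ e)) (Npos (A *ᵥ e))) :
    IsNonsingMMatrix (l.prod⁻¹ * A) := by
  have hpos := list_prod_inv_mulVec_pos_of_connects hl hAe hc
  rw [mulVec_mulVec] at hpos
  exact hZ.isNonsingMMatrix_of_connects (fun _ _ _ => id) he (fun i => (hpos i).le)
    fun i hi => absurd hi (hpos i).ne'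

theorem isNonsingMMatrix_list_prod_inv_mul_of_connects_right {A L : Matrix (Fin n) (Fin n) ℝ}
    (hl : ∀ C ∈ l, IsNonsingMMatrix C) (hle : ∀ i j, A i j ≤ (l.prod * L) i j)
    (hL : IsZMatrix L) {e : Fin n → ℝ} (he : 0 ≤ e) (hAe : 0 ≤ A *ᵥ e)
    (hc : Connects L (Nzero (A *ᵥ e)) (Npos (A *ᵥ e))) : IsNonsingMMatrix (l.prod⁻¹ * A) := by
  have hBL := list_prod_inv_mul_le hl hle
  have hsub := npos_subset_npos_list_prod_inv_mulVec hl hAe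
  refine IsZMatrix.isNonsingMMatrix_of_connects (A := L)
    (fun i j hij => (hBL i j).trans (hL i j hij))
    (fun i j hij hLij => ((hBL i j).trans_lt ((hL i j hij).lt_of_ne hLij)).ne) he
    (by rw [← mulVec_mulVec]; exact list_prod_inv_mulVec_nonneg hl hAe) ?_
  rw [← mulVec_mulVec]
  exact hc.mono (nzero_subset_nzero_of_npos_subset hAe hsub) hsub

end ListProd

end MMatrix

theorem product_M_matrix_factorization_general
    {n k : ℕ} (A L : Matrix (Fin n) (Fin n) ℝ) (M : Fin k → Matrix (Fin n) (Fin n) ℝ)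
    (hle : ∀ i j, A i j ≤ ((List.ofFn M).prod * L) i j)
    (hM : ∀ i, IsNonsingMMatrix (M i))
    (hL : ∀ i j, i ≠ j → L i j ≤ 0)
    (e : Fin n → ℝ) (he : ∀ i, 0 ≤ e i)
    (hAe : ∀ i, 0 ≤ A.mulVec e i)
    (hconn : (∃ i, Connects (M i) (Nzero (A.mulVec e)) (Npos (A.mulVec e))) ∨
      Connects L (Nzero (A.mulVec e)) (Npos (A.mulVec e))) :
    IsNonsingMMatrix ((List.ofFn fun i => (M i)⁻¹).reverse.prod * A) ∧
      IsUnit A.det ∧ ∀ i j, 0 ≤ A⁻¹ i j := by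
  set P := (List.ofFn M).prod
  have hl : ∀ C ∈ List.ofFn M, IsNonsingMMatrix C := List.forall_mem_ofFn_iff.2 hM
  have hP : IsUnit P.det := isUnit_det_list_prod hl
  have hPinv : (List.ofFn fun i => (M i)⁻¹).reverse.prod = P⁻¹ := by
    rw [list_prod_inv_reverse, List.map_reverse, List.map_ofFn]
    rfl
  rw [hPinv]
  have hB : IsNonsingMMatrix (P⁻¹ * A) := by
    rcases hconn with ⟨t, ht⟩ | hLc
    · exact isNonsingMMatrix_list_prod_inv_mul_of_connects_factor hl
        (fun i j hij => (list_prod_inv_mul_le hl hle i j).trans (hL i j hij)) he hAe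
        ⟨M t, List.mem_ofFn.2 ⟨t, rfl⟩, ht⟩
    · exact isNonsingMMatrix_list_prod_inv_mul_of_connects_right hl hle hL he hAe hLc
  have hPB : P * (P⁻¹ * A) = A := by
    rw [← Matrix.mul_assoc, mul_nonsing_inv _ hP, Matrix.one_mul]
  refine ⟨hB, ?_, ?_⟩
  · rw [← hPB, det_mul]
    exact hP.mul hB.2.1
  · rw [← hPB, Matrix.mul_inv_rev]
    exact mul_apply_nonneg hB.2.2 (list_prod_inv_nonneg hl)

theorem product_M_matrix_factorization
    {n k : ℕ} (A L : Matrix (Fin n) (Fin n) ℝ) (M : Fin k → Matrix (Fin n) (Fin n) ℝ)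
    (hle : ∀ i j, A i j ≤ ((List.ofFn M).prod * L) i j)
    (hM : ∀ i, IsNonsingMMatrix (M i))
    (hL : ∀ i j, i ≠ j → L i j ≤ 0)
    (e : Fin n → ℝ) (he0 : e ≠ 0) (he : ∀ i, 0 ≤ e i)
    (hAe : ∀ i, 0 ≤ A.mulVec e i)
    (hconn : (∃ i, Connects (M i) (Nzero (A.mulVec e)) (Npos (A.mulVec e))) ∨
      Connects L (Nzero (A.mulVec e)) (Npos (A.mulVec e))) :
    IsNonsingMMatrix ((List.ofFn fun i => (M i)⁻¹).reverse.prod * A) ∧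
      IsUnit A.det ∧ ∀ i j, 0 ≤ A⁻¹ i j :=
  product_M_matrix_factorization_general A L M hle hM hL e he hAe hconn
end

section
/- (Discrete maximum principle from monotonicity) Let L be an N×N real matrix, B an N×N∂ real matrix, and let T be the (N+N∂)×(N+N∂) block matrix T = [[L, B],[0, I]] where I is the N∂×N∂ identity. Suppose T is invertible, T⁻¹ ≥ 0 entrywise, and every row sum of T is nonnegative. Then for all u ∈ ℝ^N and u∂ ∈ ℝ^{N∂}: if (Lu + Bu∂)_i ≤ 0 for all i = 1,…,N, then max_{1≤i≤N} u_i ≤ max{0, max_{1≤j≤N∂} u∂_j}. -/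
/-!
Put `M := max 0 (max ub)` and compare `(u, ub)` with the constant vector `M`. Nonnegative row sums
give `(T M)ᵢ = M · ∑ⱼ Tᵢⱼ ≥ 0 ≥ (L u + B ub)ᵢ` on the interior rows, and the identity block gives
`(T M)ⱼ = M ≥ ub_j` on the boundary rows. So `T (u, ub) ≤ T M`, and since a matrix with nonnegative
inverse is monotone, `(u, ub) ≤ M`.
-/

open Matrix

namespace Matrix

section InverseNonneg

variable {n R : Type*} [Fintype n] [DecidableEq n] [CommRing R] [PartialOrder R] [IsOrderedRing R]

theorem le_of_mulVec_le_mulVec_of_inv_nonneg {A : Matrix n n R} (hA : IsUnit A.det)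
    (hinv : ∀ i j, 0 ≤ A⁻¹ i j) {v w : n → R} (h : A *ᵥ v ≤ A *ᵥ w) : v ≤ w := by
  have hAd : 0 ≤ A *ᵥ (w - v) := by rw [mulVec_sub]; exact sub_nonneg.mpr h
  have hd : w - v = A⁻¹ *ᵥ (A *ᵥ (w - v)) := by
    rw [mulVec_mulVec, nonsing_inv_mul A hA, one_mulVec]
  refine sub_nonneg.mp fun i => ?_
  rw [hd]
  exact dotProduct_nonneg_of_nonneg (fun j => hinv i j) hAd

end InverseNonneg

section ConstVec

variable {m n R : Type*} [Fintype n] [NonUnitalNonAssocSemiring R]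

theorem mulVec_const_apply (A : Matrix m n R) (c : R) (i : m) :
    (A *ᵥ fun _ => c) i = (∑ j, A i j) * c := by
  simp only [mulVec, dotProduct, Finset.sum_mul]

end ConstVec

section BoundaryBlock

variable {m n R : Type*} [Fintype m] [Fintype n] [DecidableEq n] [NonAssocSemiring R]

theorem fromBlocks_zero_one_mulVec_sum_elim (L : Matrix m m R) (B : Matrix m n R) (u : m → R)
    (ub : n → R) :
    fromBlocks L B 0 1 *ᵥ Sum.elim u ub = Sum.elim (L *ᵥ u + B *ᵥ ub) ub := by
  simp [fromBlocks_mulVec]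

theorem fromBlocks_zero_one_row_sum_inr (L : Matrix m m R) (B : Matrix m n R) (j : n) :
    ∑ k, fromBlocks L B 0 1 (Sum.inr j) k = 1 := by
  simp [Fintype.sum_sum_type, one_apply]

end BoundaryBlock

end Matrix

theorem discrete_maximum_principle_from_monotonicity
    {N Nb : ℕ} (hN : 0 < N) (hNb : 0 < Nb)
    (L : Matrix (Fin N) (Fin N) ℝ) (B : Matrix (Fin N) (Fin Nb) ℝ)
    (T : Matrix (Fin N ⊕ Fin Nb) (Fin N ⊕ Fin Nb) ℝ)
    (hT : T = Matrix.fromBlocks L B 0 1)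
    (hinv : IsUnit T.det)
    (hpos : ∀ i j, 0 ≤ T⁻¹ i j)
    (hrow : ∀ i, 0 ≤ ∑ j, T i j)
    (u : Fin N → ℝ) (ub : Fin Nb → ℝ)
    (h : ∀ i, (L.mulVec u + B.mulVec ub) i ≤ 0) :
    (Finset.univ.sup' ⟨⟨0, hN⟩, Finset.mem_univ _⟩ u)
      ≤ max 0 (Finset.univ.sup' ⟨⟨0, hNb⟩, Finset.mem_univ _⟩ ub) := by
  set M := max 0 (Finset.univ.sup' ⟨⟨0, hNb⟩, Finset.mem_univ _⟩ ub)
  have hM : 0 ≤ M := le_max_left _ _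
  have hT_le : T *ᵥ Sum.elim u ub ≤ T *ᵥ fun _ => M := by
    rintro (i | j)
    · rw [hT, fromBlocks_zero_one_mulVec_sum_elim, ← hT, mulVec_const_apply]
      exact (h i).trans (mul_nonneg (hrow _) hM)
    · rw [mulVec_const_apply, hT, fromBlocks_zero_one_mulVec_sum_elim,
        fromBlocks_zero_one_row_sum_inr, one_mul]
      exact (Finset.le_sup' ub (Finset.mem_univ j)).trans (le_max_right _ _)
  have h_le := le_of_mulVec_le_mulVec_of_inv_nonneg hinv hpos hT_le
  exact Finset.sup'_le _ _ fun i _ => h_le (Sum.inl i)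
end

section
/- Let A be an n×n real matrix with positive diagonal entries and nonpositive off-diagonal entries. If all row sums of A are nonnegative (A𝟙 ≥ 0, where 𝟙 is the all-ones vector) and A connects N⁰(A𝟙) with N⁺(A𝟙), then A is a nonsingular M-matrix, i.e., A is invertible and A⁻¹ ≥ 0 entrywise. -/
open Matrix

/-!
Under the sign conditions `A` is monotone in Collatz's sense: `0 ≤ A v` forces `0 ≤ v`, and a
monotone matrix is invertible with entrywise nonnegative inverse (apply monotonicity to `±v` with
`A v = 0`, and to the columns of `A⁻¹`). Monotonicity is a discrete minimum principle: if `v` had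
a negative minimum `-m` at `i`, then `0 ≤ (A v) i = ∑ⱼ A i j (v j + m) - m (A 𝟙) i`, where both
terms are `≤ 0`, so both vanish: `(A 𝟙) i = 0` and the minimum propagates along every nonzero
entry of row `i`. Starting from a minimiser, it propagates along a path supplied by `Connects` up
to an index with `(A 𝟙) i > 0`, a contradiction.
-/

namespace Matrix

variable {ι : Type*} [Fintype ι]

theorem mulVec_one_apply_eq_zero_and_eq_of_forall_le {A : Matrix ι ι ℝ} {v : ι → ℝ} {i : ι}
    (hoff : ∀ i j, i ≠ j → A i j ≤ 0) (hrow : 0 ≤ (A *ᵥ 1) i) (hv : 0 ≤ (A *ᵥ v) i)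
    (hmin : ∀ j, v i ≤ v j) (hneg : v i < 0) :
    (A *ᵥ 1) i = 0 ∧ ∀ j, A i j ≠ 0 → v j = v i := by
  have hterm : ∀ j, A i j * (v j - v i) ≤ 0 := by
    intro j
    by_cases hji : j = i
    · simp [hji]
    · exact mul_nonpos_of_nonpos_of_nonneg (hoff i j (Ne.symm hji)) (sub_nonneg.2 (hmin j))
  have hsplit : (A *ᵥ v) i = ∑ j, A i j * (v j - v i) + v i * (A *ᵥ 1) i := by
    simp only [mulVec, dotProduct, Pi.one_apply, mul_one, mul_sub, Finset.sum_sub_distrib,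
      Finset.sum_mul, mul_comm (v i), sub_add_cancel]
  have hsum : ∑ j, A i j * (v j - v i) ≤ 0 := Finset.sum_nonpos fun j _ => hterm j
  have hrow0 : v i * (A *ᵥ 1) i ≤ 0 := mul_nonpos_of_nonpos_of_nonneg hneg.le hrow
  have hsum0 : ∑ j, A i j * (v j - v i) = 0 := by linarith
  refine ⟨by nlinarith, fun j hj => ?_⟩
  have := (Finset.sum_eq_zero_iff_of_nonpos fun j _ => hterm j).1 hsum0 j (Finset.mem_univ j)
  rcases mul_eq_zero.1 this with h | h
  · exact absurd h hj
  · linarith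

variable {𝕜 : Type*} [Field 𝕜] [LinearOrder 𝕜] [IsStrictOrderedRing 𝕜]

def IsMonotone (A : Matrix ι ι 𝕜) : Prop :=
  ∀ v, 0 ≤ A *ᵥ v → 0 ≤ v

namespace IsMonotone

variable [DecidableEq ι] {A : Matrix ι ι 𝕜}

theorem isUnit_det (hA : A.IsMonotone) : IsUnit A.det := by
  refine isUnit_iff_ne_zero.2 fun hdet => ?_
  obtain ⟨v, hv, hAv⟩ := exists_mulVec_eq_zero_iff.2 hdet
  have hpos : 0 ≤ v := hA v hAv.ge
  have hneg : 0 ≤ -v := hA (-v) (by rw [mulVec_neg, hAv, neg_zero])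
  exact hv (le_antisymm (neg_nonneg.1 hneg) hpos)

theorem inv_nonneg (hA : A.IsMonotone) (i j : ι) : 0 ≤ A⁻¹ i j := by
  have hcol : A *ᵥ (A⁻¹ *ᵥ Pi.single j 1) = Pi.single j 1 := by
    rw [mulVec_mulVec, mul_nonsing_inv A hA.isUnit_det, one_mulVec]
  have hcol_nonneg := hA _ (hcol ▸ Pi.single_nonneg.2 zero_le_one) i
  rwa [mulVec_single_one, col_apply] at hcol_nonneg

end IsMonotone

end Matrix

theorem isMonotone_of_connects {n : ℕ} {A : Matrix (Fin n) (Fin n) ℝ}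
    (hoff : ∀ i j, i ≠ j → A i j ≤ 0) (hrow : 0 ≤ A *ᵥ 1)
    (hconn : Connects A (Nzero (A *ᵥ 1)) (Npos (A *ᵥ 1))) : A.IsMonotone := by
  intro v hv
  by_contra hcon
  obtain ⟨i, hi⟩ : ∃ i, v i < 0 := by simpa [Pi.le_def] using hcon
  obtain ⟨i₀, -, hmin⟩ := Finset.exists_min_image Finset.univ v ⟨i, Finset.mem_univ i⟩
  have hneg : v i₀ < 0 := (hmin i (Finset.mem_univ i)).trans_lt hi
  have hmin_at : ∀ k, v k = v i₀ → (A *ᵥ 1) k = 0 ∧ ∀ j, A k j ≠ 0 → v j = v k :=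
    fun k hk => mulVec_one_apply_eq_zero_and_eq_of_forall_le hoff (hrow k) (hv k)
      (fun j => hk ▸ hmin j (Finset.mem_univ j)) (hk ▸ hneg)
  obtain ⟨r, -, path, hp0, hpr, hstep⟩ := hconn i₀ (hmin_at i₀ rfl).1
  have hpath : ∀ k ≤ r, v (path k) = v i₀ := by
    intro k
    induction k with
    | zero => exact fun _ => by rw [hp0]
    | succ k ih =>
      intro hk
      have hk' := ih (Nat.le_of_succ_le hk)
      rw [← hk']
      exact (hmin_at _ hk').2 _ (hstep (k + 1) (Nat.le_add_left 1 k) hk)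
  exact hpr.ne' (hmin_at _ (hpath r le_rfl)).1

theorem row_sum_M_matrix_criterion_general
    {n : ℕ} (A : Matrix (Fin n) (Fin n) ℝ)
    (hoff : ∀ i j, i ≠ j → A i j ≤ 0)
    (hrow : ∀ i, 0 ≤ A.mulVec (fun _ => 1) i)
    (hconn : Connects A (Nzero (A.mulVec fun _ => 1)) (Npos (A.mulVec fun _ => 1))) :
    IsUnit A.det ∧ ∀ i j, 0 ≤ A⁻¹ i j := by
  have hA : A.IsMonotone := isMonotone_of_connects hoff hrow hconn
  exact ⟨hA.isUnit_det, hA.inv_nonneg⟩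

theorem row_sum_M_matrix_criterion
    {n : ℕ} (A : Matrix (Fin n) (Fin n) ℝ)
    (hdiag : ∀ i, 0 < A i i)
    (hoff : ∀ i j, i ≠ j → A i j ≤ 0)
    (hrow : ∀ i, 0 ≤ A.mulVec (fun _ => 1) i)
    (hconn : Connects A (Nzero (A.mulVec fun _ => 1)) (Npos (A.mulVec fun _ => 1))) :
    IsUnit A.det ∧ ∀ i j, 0 ≤ A⁻¹ i j :=
  row_sum_M_matrix_criterion_general A hoff hrow hconn
end

section
/- Let A be an n×n real matrix with positive diagonal entries and nonpositive off-diagonal entries. Then A is a nonsingular M-matrix (i.e., A is invertible with A⁻¹ ≥ 0 entrywise) if and only if there exists a diagonal matrix D with positive diagonal entries such that every row sum of AD is positive. -/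
/-!
If `A` has nonpositive off-diagonal entries and `A d > 0` for some `d > 0`, then `A` obeys a
minimum principle: `A x ≥ 0` forces `x ≥ 0`. (At an index where `x i / d i` is minimal, a
negative minimum `t` would give `(A x) i ≤ t (A d) i < 0`.) Applied to `± x` with `A x = 0` this
makes `A` invertible, and applied to the columns of `A⁻¹` it makes `A⁻¹ ≥ 0`. Conversely, if
`A⁻¹ ≥ 0` then `d = A⁻¹ 1` is positive, since no row of the invertible `A⁻¹` vanishes, and
`A d = 1`.
-/

open Matrix

namespace Matrix

theorem sum_mul_diagonal_apply {ι α : Type*} [Fintype ι] [DecidableEq ι]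
    [NonUnitalNonAssocSemiring α] (A : Matrix ι ι α) (d : ι → α) (i : ι) :
    ∑ j, (A * diagonal d) i j = (A *ᵥ d) i := by
  simp only [mul_diagonal, mulVec, dotProduct]

variable {ι R : Type*} [Fintype ι] [Field R] [LinearOrder R] [IsStrictOrderedRing R]
  {A : Matrix ι ι R}

theorem mulVec_apply_le_of_le_of_apply_eq (hoff : ∀ i j, i ≠ j → A i j ≤ 0) {x y : ι → R}
    (hyx : y ≤ x) {i : ι} (hxy : x i = y i) : (A *ᵥ x) i ≤ (A *ᵥ y) i := by
  refine Finset.sum_le_sum fun j _ => ?_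
  rcases eq_or_ne i j with rfl | hij
  · rw [hxy]
  · exact mul_le_mul_of_nonpos_left (hyx j) (hoff i j hij)

theorem nonneg_of_mulVec_nonneg (hoff : ∀ i j, i ≠ j → A i j ≤ 0) {d : ι → R}
    (hd : ∀ i, 0 < d i) (hAd : ∀ i, 0 < (A *ᵥ d) i) {x : ι → R} (hx : 0 ≤ A *ᵥ x) :
    0 ≤ x := by
  intro k
  obtain ⟨i, -, hi⟩ := Finset.exists_min_image Finset.univ (fun j => x j / d j) ⟨k, by simp⟩
  set t := x i / d i
  have hle : t • d ≤ x := fun j => by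
    simpa [le_div_iff₀ (hd j)] using hi j (Finset.mem_univ j)
  have heq : x i = (t • d) i := by simp [t, div_mul_cancel₀ _ (hd i).ne']
  have ht : 0 ≤ t := by
    by_contra! ht
    have hneg : (A *ᵥ (t • d)) i < 0 := by
      rw [mulVec_smul, Pi.smul_apply, smul_eq_mul]
      exact mul_neg_of_neg_of_pos ht (hAd i)
    exact (hx i).not_gt ((mulVec_apply_le_of_le_of_apply_eq hoff hle heq).trans_lt hneg)
  simpa using (mul_nonneg ht (hd k).le).trans (hle k)

theorem isUnit_det_of_mulVec_pos [DecidableEq ι] (hoff : ∀ i j, i ≠ j → A i j ≤ 0)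
    {d : ι → R} (hd : ∀ i, 0 < d i) (hAd : ∀ i, 0 < (A *ᵥ d) i) : IsUnit A.det := by
  rw [isUnit_iff_ne_zero]
  intro hdet
  obtain ⟨v, hv, hAv⟩ := exists_mulVec_eq_zero_iff.mpr hdet
  have hpos : 0 ≤ v := nonneg_of_mulVec_nonneg hoff hd hAd (by rw [hAv])
  have hneg : 0 ≤ -v := nonneg_of_mulVec_nonneg hoff hd hAd (by rw [mulVec_neg, hAv, neg_zero])
  exact hv (le_antisymm (neg_nonneg.mp hneg) hpos)

theorem inv_nonneg_of_mulVec_pos [DecidableEq ι] (hoff : ∀ i j, i ≠ j → A i j ≤ 0)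
    {d : ι → R} (hd : ∀ i, 0 < d i) (hAd : ∀ i, 0 < (A *ᵥ d) i) (i j : ι) : 0 ≤ A⁻¹ i j := by
  have hcol : A *ᵥ (A⁻¹ *ᵥ Pi.single j 1) = Pi.single j 1 := by
    rw [mulVec_mulVec, mul_nonsing_inv A (isUnit_det_of_mulVec_pos hoff hd hAd), one_mulVec]
  have := nonneg_of_mulVec_nonneg hoff hd hAd (hcol.symm ▸ Pi.single_nonneg.mpr zero_le_one) i
  simpa [mulVec_single_one] using this

theorem mulVec_one_pos_of_nonneg [DecidableEq ι] {B : Matrix ι ι R} (hB : IsUnit B.det)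
    (hnonneg : ∀ i j, 0 ≤ B i j) (i : ι) : 0 < (B *ᵥ 1) i := by
  have hrow : (B *ᵥ 1) i = ∑ j, B i j := by simp [mulVec, dotProduct]
  rw [hrow]
  refine (Finset.sum_nonneg fun j _ => hnonneg i j).lt_of_ne fun h =>
    hB.ne_zero (det_eq_zero_of_row_eq_zero i fun j => ?_)
  exact (Finset.sum_eq_zero_iff_of_nonneg fun j _ => hnonneg i j).mp h.symm j (Finset.mem_univ j)

end Matrix

theorem M_matrix_iff_scaled_positive_row_sums_general
    {n : ℕ} (A : Matrix (Fin n) (Fin n) ℝ)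
    (hoff : ∀ i j, i ≠ j → A i j ≤ 0) :
    (IsUnit A.det ∧ ∀ i j, 0 ≤ A⁻¹ i j) ↔
      ∃ d : Fin n → ℝ, (∀ i, 0 < d i) ∧ ∀ i, 0 < ∑ j, (A * Matrix.diagonal d) i j := by
  simp only [sum_mul_diagonal_apply]
  constructor
  · rintro ⟨hA, hinv⟩
    refine ⟨A⁻¹ *ᵥ 1, mulVec_one_pos_of_nonneg (isUnit_nonsing_inv_det A hA) hinv, fun i => ?_⟩
    rw [mulVec_mulVec, mul_nonsing_inv A hA, one_mulVec]
    exact one_pos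
  · rintro ⟨d, hd, hAd⟩
    exact ⟨isUnit_det_of_mulVec_pos hoff hd hAd, inv_nonneg_of_mulVec_pos hoff hd hAd⟩

theorem M_matrix_iff_scaled_positive_row_sums
    {n : ℕ} (A : Matrix (Fin n) (Fin n) ℝ)
    (hdiag : ∀ i, 0 < A i i)
    (hoff : ∀ i j, i ≠ j → A i j ≤ 0) :
    (IsUnit A.det ∧ ∀ i j, 0 ≤ A⁻¹ i j) ↔
      ∃ d : Fin n → ℝ, (∀ i, 0 < d i) ∧ ∀ i, 0 < ∑ j, (A * Matrix.diagonal d) i j :=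
  M_matrix_iff_scaled_positive_row_sums_general A hoff
end

section
/- Let n be an odd positive integer, K = (n+1)/2, and let p₁,…,p_K > 0 and q₁,…,q_K > 0 be the cell half-widths of a quasi-uniform rectangular Q² mesh, with L̄_h the associated Q² spectral element matrix for the Laplacian with Dirichlet boundary conditions, satisfying the mesh constraints: for all k, m ∈ {1,…,K−1}, writing h_{a−1} = p_k, h_a = p_{k+1}, h_{b−1} = q_m, h_b = q_{m+1}, one has h_a h_{a−1} ≥ (7/12)·max{h_b², h_{b−1}²}, h_b h_{b−1} ≥ (7/12)·max{h_a², h_{a−1}²}, min{h_a, h_{a−1}} ≥ (1/√3)·max{h_b, h_{b−1}}, and min{h_b, h_{b−1}} ≥ (1/√3)·max{h_a, h_{a−1}}. Then the scheme satisfies the discrete maximum principle: for any u ∈ ℝ^{(n+2)×(n+2)}, if (L̄_h u)_{ij} ≤ 0 for all interior points (i,j), then max over interior points of u_{ij} is at most max{0, max over boundary points of u_{ij}}. -/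
open Matrix

/-- `h_a` at an interior index `i`: if `i` is odd it is `p ((i+1)/2)`,
if `i` is even it is `p (i/2 + 1)`. -/
def meshHa (p : ℕ → ℝ) (i : ℕ) : ℝ :=
  if i % 2 = 1 then p ((i + 1) / 2) else p (i / 2 + 1)

/-- `h_{a-1}` at an interior index `i`: if `i` is odd it is `p ((i+1)/2)`,
if `i` is even it is `p (i/2)`. -/
def meshHa1 (p : ℕ → ℝ) (i : ℕ) : ℝ :=
  if i % 2 = 1 then p ((i + 1) / 2) else p (i / 2)

/-- The `Q²` spectral element operator for the Laplacian with Dirichlet boundary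
conditions on the quasi-uniform rectangular mesh with cell half-widths
`p` in the `x`-direction and `q` in the `y`-direction, applied to `u` at grid point `(i,j)`. -/
noncomputable def LhOp (n : ℕ) (p q : ℕ → ℝ) (u : ℕ → ℕ → ℝ) (i j : ℕ) : ℝ :=
  if i = 0 ∨ i = n + 1 ∨ j = 0 ∨ j = n + 1 then u i j
  else
    let ha := meshHa p i
    let ha1 := meshHa1 p i
    let hb := meshHa q j
    let hb1 := meshHa1 q j
    if i % 2 = 1 then
      if j % 2 = 1 then
        -- cell center
        (2 * ha ^ 2 + 2 * hb ^ 2) / (ha ^ 2 * hb ^ 2) * u i j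
          - u (i + 1) j / ha ^ 2 - u (i - 1) j / ha ^ 2
          - u i (j + 1) / hb ^ 2 - u i (j - 1) / hb ^ 2
      else
        -- edge center, edge parallel to the x-axis
        (7 * ha ^ 2 + 4 * hb * hb1) / (2 * hb * hb1 * ha ^ 2) * u i j
          - 4 * u i (j + 1) / (hb * (hb + hb1)) - 4 * u i (j - 1) / (hb1 * (hb + hb1))
          - u (i + 1) j / ha ^ 2 - u (i - 1) j / ha ^ 2
          + u i (j + 2) / (2 * hb * (hb + hb1)) + u i (j - 2) / (2 * hb1 * (hb + hb1))
    else
      if j % 2 = 1 then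
        -- edge center, edge parallel to the y-axis
        (7 * hb ^ 2 + 4 * ha * ha1) / (2 * ha * ha1 * hb ^ 2) * u i j
          - 4 * u (i + 1) j / (ha * (ha + ha1)) - 4 * u (i - 1) j / (ha1 * (ha + ha1))
          - u i (j + 1) / hb ^ 2 - u i (j - 1) / hb ^ 2
          + u (i + 2) j / (2 * ha * (ha + ha1)) + u (i - 2) j / (2 * ha1 * (ha + ha1))
      else
        -- interior knot
        7 * (ha * ha1 + hb * hb1) / (2 * ha * ha1 * hb * hb1) * u i j
          - 4 * u (i + 1) j / (ha * (ha + ha1)) - 4 * u (i - 1) j / (ha1 * (ha + ha1))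
          - 4 * u i (j + 1) / (hb * (hb + hb1)) - 4 * u i (j - 1) / (hb1 * (hb + hb1))
          + u (i + 2) j / (2 * ha * (ha + ha1)) + u (i - 2) j / (2 * ha1 * (ha + ha1))
          + u i (j + 2) / (2 * hb * (hb + hb1)) + u i (j - 2) / (2 * hb1 * (hb + hb1))

/-- The matrix `L̄_h` of the `Q²` spectral element operator, acting on
`ℝ^{(n+2)×(n+2)}`, obtained by applying the operator to the standard basis vectors. -/
noncomputable def LhMat (n : ℕ) (p q : ℕ → ℝ) :
    Matrix (Fin (n + 2) × Fin (n + 2)) (Fin (n + 2) × Fin (n + 2)) ℝ :=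
  Matrix.of fun x y =>
    LhOp n p q (fun a b => if a = (y.1 : ℕ) ∧ b = (y.2 : ℕ) then 1 else 0) (x.1 : ℕ) (x.2 : ℕ)

/-- The local mesh constraints (4.3) for all pairs of adjacent cells. -/
def MeshConstraints (K : ℕ) (p q : ℕ → ℝ) : Prop :=
  ∀ k m, 1 ≤ k → k ≤ K - 1 → 1 ≤ m → m ≤ K - 1 →
    p (k + 1) * p k ≥ 7 / 12 * max ((q (m + 1)) ^ 2) ((q m) ^ 2) ∧
    q (m + 1) * q m ≥ 7 / 12 * max ((p (k + 1)) ^ 2) ((p k) ^ 2) ∧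
    min (p (k + 1)) (p k) ≥ (1 / Real.sqrt 3) * max (q (m + 1)) (q m) ∧
    min (q (m + 1)) (q m) ≥ (1 / Real.sqrt 3) * max (p (k + 1)) (p k)

/-- The set of boundary grid points of the `(n+2) × (n+2)` grid, as a finite set. -/
def boundarySet (n : ℕ) : Finset (ℕ × ℕ) :=
  (Finset.range (n + 2) ×ˢ Finset.range (n + 2)).filter
    fun x => x.1 = 0 ∨ x.1 = n + 1 ∨ x.2 = 0 ∨ x.2 = n + 1

lemma boundarySet_nonempty (n : ℕ) : (boundarySet n).Nonempty :=
  ⟨(0, 0), by simp [boundarySet]⟩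

/-! At an interior point where `u` attains its maximum over the grid, a nonnegative combination
of the inequalities `(L̄_h u) ≤ 0` at that point and at the nodes of the adjacent cells has, after
clearing denominators, nonpositive coefficients at every node other than the point itself and a
negative one at a node one column further left; since the rows of `L̄_h` sum to zero, `u` is
maximal at that node too. A single row does not suffice, because the rows of edge centres and
knots have positive entries `1 / (2 h (h + h'))` at distance two. Weighting the row of each
neighbour by the half-widths on the opposite side of the point cancels them, and the mesh
constraints, in the weak forms `h_a² ≤ 2 h_b h_{b-1}` and `h_b² ≤ 3 h_a²`, keep the remaining
coefficients nonpositive. Moving left column by column, the maximum reaches the boundary. -/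

open Finset

def MeshPositive (K : ℕ) (p : ℕ → ℝ) : Prop :=
  ∀ k, 1 ≤ k → k ≤ K → 0 < p k

def IsDiscreteSubharmonic (n : ℕ) (p q : ℕ → ℝ) (u : ℕ → ℕ → ℝ) : Prop :=
  ∀ i j, 1 ≤ i → i ≤ n → 1 ≤ j → j ≤ n → LhOp n p q u i j ≤ 0

def IsGridMax (n : ℕ) (u : ℕ → ℕ → ℝ) (i j : ℕ) : Prop :=
  i ≤ n + 1 ∧ j ≤ n + 1 ∧ ∀ x y, x ≤ n + 1 → y ≤ n + 1 → u x y ≤ u i j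

lemma IsGridMax.le {n : ℕ} {u : ℕ → ℕ → ℝ} {i j x y : ℕ} (h : IsGridMax n u i j)
    (hx : x ≤ n + 1) (hy : y ≤ n + 1) : u x y ≤ u i j :=
  h.2.2 x y hx hy

lemma IsGridMax.of_le {n : ℕ} {u : ℕ → ℕ → ℝ} {i j x y : ℕ} (h : IsGridMax n u i j)
    (hx : x ≤ n + 1) (hy : y ≤ n + 1) (hle : u i j ≤ u x y) : IsGridMax n u x y :=
  ⟨hx, hy, fun _ _ hx' hy' => (h.le hx' hy').trans hle⟩

/- The rows of `L̄_h` multiplied by their common denominators; `E`, `W`, `N`, `S` are the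
neighbours at `i + 1`, `i - 1`, `j + 1`, `j - 1`. In `edgeStencil`, `a` is the half-width along
the edge, `b` and `b₁` those of the two cells it separates (forward `F` and backward `B`), and
`zL`, `zR` are the values at the two knots ending the edge. -/

def cellStencil (a b z zE zW zN zS : ℝ) : ℝ :=
  (2 * a ^ 2 + 2 * b ^ 2) * z - b ^ 2 * (zE + zW) - a ^ 2 * (zN + zS)

def edgeStencil (a b b₁ z zF zB zFF zBB zL zR : ℝ) : ℝ :=
  (7 * a ^ 2 + 4 * b * b₁) * (b + b₁) * z - 8 * a ^ 2 * b₁ * zF - 8 * a ^ 2 * b * zB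
    + a ^ 2 * b₁ * zFF + a ^ 2 * b * zBB - 2 * b * b₁ * (b + b₁) * (zL + zR)

def knotStencil (a a₁ b b₁ z zE zW zN zS zEE zWW zNN zSS : ℝ) : ℝ :=
  7 * (a * a₁ + b * b₁) * (a + a₁) * (b + b₁) * z
    - 8 * a₁ * b * b₁ * (b + b₁) * zE - 8 * a * b * b₁ * (b + b₁) * zW
    - 8 * a * a₁ * b₁ * (a + a₁) * zN - 8 * a * a₁ * b * (a + a₁) * zS
    + a₁ * b * b₁ * (b + b₁) * zEE + a * b * b₁ * (b + b₁) * zWW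
    + a * a₁ * b₁ * (a + a₁) * zNN + a * a₁ * b * (a + a₁) * zSS

lemma cellStencil_comm (a b z zE zW zN zS : ℝ) :
    cellStencil a b z zE zW zN zS = cellStencil b a z zN zS zE zW := by
  unfold cellStencil; ring

lemma le_of_cellStencil_nonpos {a b z zE zW zN zS : ℝ} (hb : b ≠ 0)
    (h : cellStencil a b z zE zW zN zS ≤ 0) (hE : zE ≤ z) (hN : zN ≤ z) (hS : zS ≤ z) :
    z ≤ zW := by
  unfold cellStencil at h
  have key : b ^ 2 * (z - zW) ≤ 0 := by
    linarith [mul_le_mul_of_nonneg_left hE (sq_nonneg b),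
      mul_le_mul_of_nonneg_left hN (sq_nonneg a), mul_le_mul_of_nonneg_left hS (sq_nonneg a)]
  exact sub_nonpos.1 (nonpos_of_mul_nonpos_right key (by positivity))

lemma le_of_edgeStencil_nonpos {a b b₁ z zF zB zFF zBB zL zR zFL zFR zBL zBR : ℝ}
    (hb : 0 < b) (hb₁ : 0 < b₁) (hab : b ^ 2 ≤ 3 * a ^ 2) (hab₁ : b₁ ^ 2 ≤ 3 * a ^ 2)
    (h : edgeStencil a b b₁ z zF zB zFF zBB zL zR ≤ 0)
    (hF : cellStencil a b zF zFL zFR zFF z ≤ 0) (hB : cellStencil a b₁ zB zBL zBR z zBB ≤ 0)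
    (hzF : zF ≤ z) (hzB : zB ≤ z) (hzL : zL ≤ z) (hzR : zR ≤ z)
    (hzFL : zFL ≤ z) (hzFR : zFR ≤ z) (hzBL : zBL ≤ z) : z ≤ zBR := by
  unfold edgeStencil cellStencil at *
  have key : b * b₁ * b₁ * (z - zBR) ≤ 0 := by
    linarith [mul_nonpos_of_nonneg_of_nonpos hb₁.le hF, mul_nonpos_of_nonneg_of_nonpos hb.le hB,
      mul_nonneg (mul_nonneg hb₁.le (sub_nonneg.2 hab)) (sub_nonneg.2 hzF),
      mul_nonneg (mul_nonneg hb.le (sub_nonneg.2 hab₁)) (sub_nonneg.2 hzB),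
      mul_nonneg (mul_pos (mul_pos hb hb₁) (add_pos hb hb₁)).le (sub_nonneg.2 hzL),
      mul_nonneg (mul_pos (mul_pos hb hb₁) (add_pos hb hb₁)).le (sub_nonneg.2 hzR),
      mul_nonneg (mul_pos (mul_pos hb hb₁) hb).le (sub_nonneg.2 hzFL),
      mul_nonneg (mul_pos (mul_pos hb hb₁) hb).le (sub_nonneg.2 hzFR),
      mul_nonneg (mul_pos (mul_pos hb hb₁) hb₁).le (sub_nonneg.2 hzBL)]
  exact sub_nonpos.1 (nonpos_of_mul_nonpos_right key (by positivity))

lemma le_of_knotStencil_nonpos {a a₁ b b₁ z zE zW zN zS zEE zWW zNN zSS zEN zES zWN zWS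
      zENN zESS zWNN zWSS zEEN zEES zWWN zWWS : ℝ}
    (ha : 0 < a) (ha₁ : 0 < a₁) (hb : 0 < b) (hb₁ : 0 < b₁)
    (hab : a ^ 2 ≤ 2 * b * b₁) (ha₁b : a₁ ^ 2 ≤ 2 * b * b₁)
    (hba : b ^ 2 ≤ 2 * a * a₁) (hb₁a : b₁ ^ 2 ≤ 2 * a * a₁)
    (h : knotStencil a a₁ b b₁ z zE zW zN zS zEE zWW zNN zSS ≤ 0)
    (hE : edgeStencil a b b₁ zE zEN zES zENN zESS zEE z ≤ 0)
    (hW : edgeStencil a₁ b b₁ zW zWN zWS zWNN zWSS z zWW ≤ 0)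
    (hN : edgeStencil b a a₁ zN zEN zWN zEEN zWWN zNN z ≤ 0)
    (hS : edgeStencil b₁ a a₁ zS zES zWS zEES zWWS z zSS ≤ 0)
    (hEN : cellStencil a b zEN zEEN zN zENN zE ≤ 0)
    (hES : cellStencil a b₁ zES zEES zS zE zESS ≤ 0)
    (hWN : cellStencil a₁ b zWN zN zWWN zWNN zW ≤ 0)
    (hWS : cellStencil a₁ b₁ zWS zS zWWS zW zWSS ≤ 0)
    (hzE : zE ≤ z) (hzW : zW ≤ z) (hzN : zN ≤ z) (hzS : zS ≤ z)
    (hzEN : zEN ≤ z) (hzES : zES ≤ z) (hzWS : zWS ≤ z) : z ≤ zWN := by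
  unfold knotStencil edgeStencil cellStencil at *
  have key : a * b₁ * (a₁ ^ 2 + b ^ 2) * (z - zWN) ≤ 0 := by
    linarith [mul_nonpos_of_nonneg_of_nonpos ha₁.le hE, mul_nonpos_of_nonneg_of_nonpos ha.le hW,
      mul_nonpos_of_nonneg_of_nonpos hb₁.le hN, mul_nonpos_of_nonneg_of_nonpos hb.le hS,
      mul_nonpos_of_nonneg_of_nonpos (mul_pos ha₁ hb₁).le hEN,
      mul_nonpos_of_nonneg_of_nonpos (mul_pos ha₁ hb).le hES,
      mul_nonpos_of_nonneg_of_nonpos (mul_pos ha hb₁).le hWN,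
      mul_nonpos_of_nonneg_of_nonpos (mul_pos ha hb).le hWS,
      mul_nonneg (mul_nonneg (mul_pos ha₁ (add_pos hb hb₁)).le (sub_nonneg.2 hab))
        (sub_nonneg.2 hzE),
      mul_nonneg (mul_nonneg (mul_pos ha (add_pos hb hb₁)).le (sub_nonneg.2 ha₁b))
        (sub_nonneg.2 hzW),
      mul_nonneg (mul_nonneg (mul_pos hb₁ (add_pos ha ha₁)).le (sub_nonneg.2 hba))
        (sub_nonneg.2 hzN),
      mul_nonneg (mul_nonneg (mul_pos hb (add_pos ha ha₁)).le (sub_nonneg.2 hb₁a))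
        (sub_nonneg.2 hzS),
      mul_nonneg (mul_nonneg (mul_pos ha₁ hb₁).le (add_pos (pow_pos ha 2) (pow_pos hb 2)).le)
        (sub_nonneg.2 hzEN),
      mul_nonneg (mul_nonneg (mul_pos ha₁ hb).le (add_pos (pow_pos ha 2) (pow_pos hb₁ 2)).le)
        (sub_nonneg.2 hzES),
      mul_nonneg (mul_nonneg (mul_pos ha hb).le (add_pos (pow_pos ha₁ 2) (pow_pos hb₁ 2)).le)
        (sub_nonneg.2 hzWS)]
  exact sub_nonpos.1 (nonpos_of_mul_nonpos_right key (by positivity))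

lemma sq_le_three_mul_sq_of_le {x y : ℝ} (hy : 0 ≤ y) (h : 1 / √3 * y ≤ x) :
    y ^ 2 ≤ 3 * x ^ 2 := by
  have h3 : (0 : ℝ) < √3 := by positivity
  have hyx : y ≤ √3 * x := by rwa [one_div, inv_mul_le_iff₀ h3] at h
  calc y ^ 2 ≤ (√3 * x) ^ 2 := pow_le_pow_left₀ hy hyx 2
    _ = 3 * x ^ 2 := by rw [mul_pow, Real.sq_sqrt (by norm_num)]

namespace MeshConstraints

variable {K : ℕ} {p q : ℕ → ℝ}

lemma symm (h : MeshConstraints K p q) : MeshConstraints K q p := fun k m hk hkK hm hmK =>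
  let ⟨h₁, h₂, h₃, h₄⟩ := h m k hm hmK hk hkK
  ⟨h₂, h₁, h₄, h₃⟩

lemma sq_le_two_mul (h : MeshConstraints K p q) {k m : ℕ} (hk : 1 ≤ k) (hkK : k ≤ K - 1)
    (hm : 1 ≤ m) (hmK : m ≤ K - 1) :
    q (m + 1) ^ 2 ≤ 2 * p (k + 1) * p k ∧ q m ^ 2 ≤ 2 * p (k + 1) * p k := by
  have h₁ := (h k m hk hkK hm hmK).1
  constructor <;> nlinarith [le_max_left (q (m + 1) ^ 2) (q m ^ 2),
    le_max_right (q (m + 1) ^ 2) (q m ^ 2), sq_nonneg (q m)]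

lemma sq_le_three_mul_sq (h : MeshConstraints K p q) (hq : MeshPositive K q) (hK : 2 ≤ K)
    {k m : ℕ} (hk : 1 ≤ k) (hkK : k ≤ K) (hm : 1 ≤ m) (hmK : m ≤ K - 1) :
    q (m + 1) ^ 2 ≤ 3 * p k ^ 2 ∧ q m ^ 2 ≤ 3 * p k ^ 2 := by
  obtain ⟨k', hk', hk'K, hmin⟩ :
      ∃ k', 1 ≤ k' ∧ k' ≤ K - 1 ∧ min (p (k' + 1)) (p k') ≤ p k := by
    rcases Nat.lt_or_ge k K with hlt | hge
    · exact ⟨k, hk, by omega, min_le_right _ _⟩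
    · obtain rfl : k = K - 1 + 1 := by omega
      exact ⟨K - 1, by omega, le_rfl, min_le_left _ _⟩
  have hq' : 1 / √3 * max (q (m + 1)) (q m) ≤ p k := (h k' m hk' hk'K hm hmK).2.2.1.trans hmin
  have hs : (0 : ℝ) ≤ 1 / √3 := by positivity
  exact ⟨sq_le_three_mul_sq_of_le (hq _ (by omega) (by omega)).le
      ((mul_le_mul_of_nonneg_left (le_max_left _ _) hs).trans hq'),
    sq_le_three_mul_sq_of_le (hq _ hm (by omega)).le
      ((mul_le_mul_of_nonneg_left (le_max_right _ _) hs).trans hq')⟩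

end MeshConstraints

/- Odd indices `2 * k + 1` are cell centres, of half-width `p (k + 1)`, and even indices
`2 * k + 2` are knots between cells `k + 1` and `k + 2`; this avoids natural-number subtraction. -/

section Grid

variable {n : ℕ} {p q : ℕ → ℝ} {u : ℕ → ℕ → ℝ} {k m : ℕ}

lemma cellStencil_nonpos (hp : MeshPositive ((n + 1) / 2) p) (hq : MeshPositive ((n + 1) / 2) q)
    (hu : IsDiscreteSubharmonic n p q u) (hk : 2 * k + 1 ≤ n) (hm : 2 * m + 1 ≤ n) :
    cellStencil (p (k + 1)) (q (m + 1)) (u (2 * k + 1) (2 * m + 1))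
      (u (2 * k + 2) (2 * m + 1)) (u (2 * k) (2 * m + 1))
      (u (2 * k + 1) (2 * m + 2)) (u (2 * k + 1) (2 * m)) ≤ 0 := by
  have ha : 0 < p (k + 1) := hp _ (by omega) (by omega)
  have hb : 0 < q (m + 1) := hq _ (by omega) (by omega)
  have hin : ¬(2 * k + 1 = 0 ∨ 2 * k + 1 = n + 1 ∨ 2 * m + 1 = 0 ∨ 2 * m + 1 = n + 1) := by
    omega
  calc _ = p (k + 1) ^ 2 * q (m + 1) ^ 2 * LhOp n p q u (2 * k + 1) (2 * m + 1) := by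
        simp only [LhOp, meshHa, meshHa1, cellStencil, Nat.add_sub_cancel,
          show (2 * k + 1) % 2 = 1 by omega, show (2 * m + 1) % 2 = 1 by omega,
          show (2 * k + 1 + 1) / 2 = k + 1 by omega, show (2 * m + 1 + 1) / 2 = m + 1 by omega,
          hin, if_true, if_false]
        field_simp
        ring
    _ ≤ 0 := mul_nonpos_of_nonneg_of_nonpos (by positivity)
      (hu (2 * k + 1) (2 * m + 1) (by omega) (by omega) (by omega) (by omega))

lemma edgeStencil_nonpos_of_odd_even (hp : MeshPositive ((n + 1) / 2) p)
    (hq : MeshPositive ((n + 1) / 2) q) (hu : IsDiscreteSubharmonic n p q u)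
    (hk : 2 * k + 1 ≤ n) (hm : 2 * m + 3 ≤ n) :
    edgeStencil (p (k + 1)) (q (m + 2)) (q (m + 1)) (u (2 * k + 1) (2 * m + 2))
      (u (2 * k + 1) (2 * m + 3)) (u (2 * k + 1) (2 * m + 1))
      (u (2 * k + 1) (2 * m + 4)) (u (2 * k + 1) (2 * m))
      (u (2 * k + 2) (2 * m + 2)) (u (2 * k) (2 * m + 2)) ≤ 0 := by
  have ha : 0 < p (k + 1) := hp _ (by omega) (by omega)
  have hb : 0 < q (m + 2) := hq _ (by omega) (by omega)
  have hb₁ : 0 < q (m + 1) := hq _ (by omega) (by omega)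
  have hin : ¬(2 * k + 1 = 0 ∨ 2 * k + 1 = n + 1 ∨ 2 * m + 2 = 0 ∨ 2 * m + 2 = n + 1) := by
    omega
  calc _ = 2 * p (k + 1) ^ 2 * q (m + 2) * q (m + 1) * (q (m + 2) + q (m + 1)) *
        LhOp n p q u (2 * k + 1) (2 * m + 2) := by
        simp only [LhOp, meshHa, meshHa1, edgeStencil, Nat.add_sub_cancel,
          show (2 * k + 1) % 2 = 1 by omega, show (2 * m + 2) % 2 = 0 by omega,
          show (2 * k + 1 + 1) / 2 = k + 1 by omega, show (2 * m + 2) / 2 = m + 1 by omega,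
          show 2 * m + 2 - 1 = 2 * m + 1 by omega, show 2 * m + 2 - 2 = 2 * m by omega,
          hin, Nat.zero_ne_one, if_true, if_false]
        field_simp
        ring
    _ ≤ 0 := mul_nonpos_of_nonneg_of_nonpos (by positivity)
      (hu (2 * k + 1) (2 * m + 2) (by omega) (by omega) (by omega) (by omega))

lemma edgeStencil_nonpos_of_even_odd (hp : MeshPositive ((n + 1) / 2) p)
    (hq : MeshPositive ((n + 1) / 2) q) (hu : IsDiscreteSubharmonic n p q u)
    (hk : 2 * k + 3 ≤ n) (hm : 2 * m + 1 ≤ n) :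
    edgeStencil (q (m + 1)) (p (k + 2)) (p (k + 1)) (u (2 * k + 2) (2 * m + 1))
      (u (2 * k + 3) (2 * m + 1)) (u (2 * k + 1) (2 * m + 1))
      (u (2 * k + 4) (2 * m + 1)) (u (2 * k) (2 * m + 1))
      (u (2 * k + 2) (2 * m + 2)) (u (2 * k + 2) (2 * m)) ≤ 0 := by
  have ha : 0 < p (k + 2) := hp _ (by omega) (by omega)
  have ha₁ : 0 < p (k + 1) := hp _ (by omega) (by omega)
  have hb : 0 < q (m + 1) := hq _ (by omega) (by omega)
  have hin : ¬(2 * k + 2 = 0 ∨ 2 * k + 2 = n + 1 ∨ 2 * m + 1 = 0 ∨ 2 * m + 1 = n + 1) := by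
    omega
  calc _ = 2 * q (m + 1) ^ 2 * p (k + 2) * p (k + 1) * (p (k + 2) + p (k + 1)) *
        LhOp n p q u (2 * k + 2) (2 * m + 1) := by
        simp only [LhOp, meshHa, meshHa1, edgeStencil, Nat.add_sub_cancel,
          show (2 * k + 2) % 2 = 0 by omega, show (2 * m + 1) % 2 = 1 by omega,
          show (2 * m + 1 + 1) / 2 = m + 1 by omega, show (2 * k + 2) / 2 = k + 1 by omega,
          show 2 * k + 2 - 1 = 2 * k + 1 by omega, show 2 * k + 2 - 2 = 2 * k by omega,
          hin, Nat.zero_ne_one, if_true, if_false]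
        field_simp
        ring
    _ ≤ 0 := mul_nonpos_of_nonneg_of_nonpos (by positivity)
      (hu (2 * k + 2) (2 * m + 1) (by omega) (by omega) (by omega) (by omega))

lemma knotStencil_nonpos (hp : MeshPositive ((n + 1) / 2) p)
    (hq : MeshPositive ((n + 1) / 2) q) (hu : IsDiscreteSubharmonic n p q u)
    (hk : 2 * k + 3 ≤ n) (hm : 2 * m + 3 ≤ n) :
    knotStencil (p (k + 2)) (p (k + 1)) (q (m + 2)) (q (m + 1)) (u (2 * k + 2) (2 * m + 2))
      (u (2 * k + 3) (2 * m + 2)) (u (2 * k + 1) (2 * m + 2))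
      (u (2 * k + 2) (2 * m + 3)) (u (2 * k + 2) (2 * m + 1))
      (u (2 * k + 4) (2 * m + 2)) (u (2 * k) (2 * m + 2))
      (u (2 * k + 2) (2 * m + 4)) (u (2 * k + 2) (2 * m)) ≤ 0 := by
  have ha : 0 < p (k + 2) := hp _ (by omega) (by omega)
  have ha₁ : 0 < p (k + 1) := hp _ (by omega) (by omega)
  have hb : 0 < q (m + 2) := hq _ (by omega) (by omega)
  have hb₁ : 0 < q (m + 1) := hq _ (by omega) (by omega)
  have hin : ¬(2 * k + 2 = 0 ∨ 2 * k + 2 = n + 1 ∨ 2 * m + 2 = 0 ∨ 2 * m + 2 = n + 1) := by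
    omega
  calc _ = 2 * p (k + 2) * p (k + 1) * q (m + 2) * q (m + 1) * (p (k + 2) + p (k + 1)) *
        (q (m + 2) + q (m + 1)) * LhOp n p q u (2 * k + 2) (2 * m + 2) := by
        simp only [LhOp, meshHa, meshHa1, knotStencil,
          show (2 * k + 2) % 2 = 0 by omega, show (2 * m + 2) % 2 = 0 by omega,
          show (2 * k + 2) / 2 = k + 1 by omega, show (2 * m + 2) / 2 = m + 1 by omega,
          show 2 * k + 2 - 1 = 2 * k + 1 by omega, show 2 * k + 2 - 2 = 2 * k by omega,
          show 2 * m + 2 - 1 = 2 * m + 1 by omega, show 2 * m + 2 - 2 = 2 * m by omega,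
          hin, Nat.zero_ne_one, if_false]
        field_simp
        ring
    _ ≤ 0 := mul_nonpos_of_nonneg_of_nonpos (by positivity)
      (hu (2 * k + 2) (2 * m + 2) (by omega) (by omega) (by omega) (by omega))

lemma cell_max_step (hp : MeshPositive ((n + 1) / 2) p) (hq : MeshPositive ((n + 1) / 2) q)
    (hu : IsDiscreteSubharmonic n p q u) (hk : 2 * k + 1 ≤ n) (hm : 2 * m + 1 ≤ n)
    (hmax : IsGridMax n u (2 * k + 1) (2 * m + 1)) :
    u (2 * k + 1) (2 * m + 1) ≤ u (2 * k) (2 * m + 1) :=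
  le_of_cellStencil_nonpos (hq _ (by omega) (by omega)).ne' (cellStencil_nonpos hp hq hu hk hm)
    (hmax.le (by omega) (by omega)) (hmax.le (by omega) (by omega)) (hmax.le (by omega) (by omega))

lemma edge_max_step_of_odd_even (hp : MeshPositive ((n + 1) / 2) p)
    (hq : MeshPositive ((n + 1) / 2) q) (hmesh : MeshConstraints ((n + 1) / 2) p q)
    (hu : IsDiscreteSubharmonic n p q u) (hk : 2 * k + 1 ≤ n) (hm : 2 * m + 3 ≤ n)
    (hmax : IsGridMax n u (2 * k + 1) (2 * m + 2)) :
    u (2 * k + 1) (2 * m + 2) ≤ u (2 * k) (2 * m + 1) := by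
  obtain ⟨hb, hb₁⟩ := hmesh.sq_le_three_mul_sq hq (k := k + 1) (m := m + 1)
    (by omega) (by omega) (by omega) (by omega) (by omega)
  apply le_of_edgeStencil_nonpos (hq _ (by omega) (by omega)) (hq _ (by omega) (by omega)) hb hb₁
    (edgeStencil_nonpos_of_odd_even hp hq hu hk (by omega))
    (cellStencil_nonpos hp hq hu (m := m + 1) hk (by omega))
    (cellStencil_nonpos hp hq hu hk (by omega))
  all_goals exact hmax.le (by omega) (by omega)

lemma edge_max_step_of_even_odd (hp : MeshPositive ((n + 1) / 2) p)
    (hq : MeshPositive ((n + 1) / 2) q) (hmesh : MeshConstraints ((n + 1) / 2) p q)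
    (hu : IsDiscreteSubharmonic n p q u) (hk : 2 * k + 3 ≤ n) (hm : 2 * m + 1 ≤ n)
    (hmax : IsGridMax n u (2 * k + 2) (2 * m + 1)) :
    u (2 * k + 2) (2 * m + 1) ≤ u (2 * k + 1) (2 * m) := by
  obtain ⟨ha, ha₁⟩ := hmesh.symm.sq_le_three_mul_sq hp (k := m + 1) (m := k + 1)
    (by omega) (by omega) (by omega) (by omega) (by omega)
  have hE := cellStencil_nonpos hp hq hu (k := k + 1) (by omega) hm
  have hW := cellStencil_nonpos hp hq hu (k := k) (by omega) hm
  rw [cellStencil_comm] at hE hW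
  apply le_of_edgeStencil_nonpos (hp _ (by omega) (by omega)) (hp _ (by omega) (by omega)) ha ha₁
    (edgeStencil_nonpos_of_even_odd hp hq hu (by omega) hm) hE hW
  all_goals exact hmax.le (by omega) (by omega)

lemma knot_max_step (hp : MeshPositive ((n + 1) / 2) p)
    (hq : MeshPositive ((n + 1) / 2) q) (hmesh : MeshConstraints ((n + 1) / 2) p q)
    (hu : IsDiscreteSubharmonic n p q u) (hk : 2 * k + 3 ≤ n) (hm : 2 * m + 3 ≤ n)
    (hmax : IsGridMax n u (2 * k + 2) (2 * m + 2)) :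
    u (2 * k + 2) (2 * m + 2) ≤ u (2 * k + 1) (2 * m + 3) := by
  obtain ⟨hab, ha₁b⟩ := hmesh.symm.sq_le_two_mul (k := m + 1) (m := k + 1)
    (by omega) (by omega) (by omega) (by omega)
  obtain ⟨hba, hb₁a⟩ := hmesh.sq_le_two_mul (k := k + 1) (m := m + 1)
    (by omega) (by omega) (by omega) (by omega)
  apply le_of_knotStencil_nonpos (hp _ (by omega) (by omega)) (hp _ (by omega) (by omega))
    (hq _ (by omega) (by omega)) (hq _ (by omega) (by omega)) hab ha₁b hba hb₁a
    (knotStencil_nonpos hp hq hu (by omega) (by omega))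
    (edgeStencil_nonpos_of_odd_even hp hq hu (k := k + 1) (by omega) (by omega))
    (edgeStencil_nonpos_of_odd_even hp hq hu (k := k) (by omega) (by omega))
    (edgeStencil_nonpos_of_even_odd hp hq hu (m := m + 1) (by omega) (by omega))
    (edgeStencil_nonpos_of_even_odd hp hq hu (m := m) (by omega) (by omega))
    (cellStencil_nonpos hp hq hu (k := k + 1) (m := m + 1) (by omega) (by omega))
    (cellStencil_nonpos hp hq hu (k := k + 1) (m := m) (by omega) (by omega))
    (cellStencil_nonpos hp hq hu (k := k) (m := m + 1) (by omega) (by omega))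
    (cellStencil_nonpos hp hq hu (k := k) (m := m) (by omega) (by omega))
  all_goals exact hmax.le (by omega) (by omega)

end Grid

lemma exists_of_forall_exists_lt {α : Type*} (f : α → ℕ) {P Q : α → Prop}
    (h : ∀ x, P x → ¬Q x → ∃ y, P y ∧ f y < f x) {x : α} (hx : P x) :
    ∃ y, P y ∧ Q y := by
  induction hfx : f x using Nat.strong_induction_on generalizing x with
  | _ N ih =>
    by_cases hQ : Q x
    · exact ⟨x, hx, hQ⟩
    · obtain ⟨y, hy, hlt⟩ := h x hx hQ
      exact ih _ (hfx ▸ hlt) hy rfl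

lemma exists_isGridMax_lt {n : ℕ} {p q : ℕ → ℝ} {u : ℕ → ℕ → ℝ} (hodd : Odd n)
    (hp : MeshPositive ((n + 1) / 2) p) (hq : MeshPositive ((n + 1) / 2) q)
    (hmesh : MeshConstraints ((n + 1) / 2) p q) (hu : IsDiscreteSubharmonic n p q u)
    {i j : ℕ} (hmax : IsGridMax n u i j) (hB : (i, j) ∉ boundarySet n) :
    ∃ x : ℕ × ℕ, IsGridMax n u x.1 x.2 ∧ x.1 < i := by
  have hn := Nat.odd_iff.mp hodd
  have hin := hmax.1
  have hjn := hmax.2.1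
  simp only [boundarySet, mem_filter, mem_product, mem_range] at hB
  obtain ⟨k, hk⟩ : ∃ k, i = 2 * k + 1 ∨ i = 2 * k + 2 := ⟨(i - 1) / 2, by omega⟩
  obtain ⟨m, hm⟩ : ∃ m, j = 2 * m + 1 ∨ j = 2 * m + 2 := ⟨(j - 1) / 2, by omega⟩
  rcases hk with rfl | rfl <;> rcases hm with rfl | rfl
  · exact ⟨(2 * k, 2 * m + 1), hmax.of_le (by omega) (by omega)
      (cell_max_step hp hq hu (by omega) (by omega) hmax), by omega⟩
  · exact ⟨(2 * k, 2 * m + 1), hmax.of_le (by omega) (by omega)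
      (edge_max_step_of_odd_even hp hq hmesh hu (by omega) (by omega) hmax), by omega⟩
  · exact ⟨(2 * k + 1, 2 * m), hmax.of_le (by omega) (by omega)
      (edge_max_step_of_even_odd hp hq hmesh hu (by omega) (by omega) hmax), by omega⟩
  · exact ⟨(2 * k + 1, 2 * m + 3), hmax.of_le (by omega) (by omega)
      (knot_max_step hp hq hmesh hu (by omega) (by omega) hmax), by omega⟩

lemma exists_isGridMax (n : ℕ) (u : ℕ → ℕ → ℝ) : ∃ x : ℕ × ℕ, IsGridMax n u x.1 x.2 := by
  obtain ⟨x, hx, hmax⟩ := (range (n + 2) ×ˢ range (n + 2)).exists_max_image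
    (fun x => u x.1 x.2) ⟨(0, 0), by simp⟩
  simp only [mem_product, mem_range] at hx
  refine ⟨x, by omega, by omega, fun y z hy hz => hmax (y, z) ?_⟩
  simp only [mem_product, mem_range]
  omega

theorem Q2_discrete_maximum_principle_general
    (n : ℕ) (hodd : Odd n) (p q : ℕ → ℝ)
    (hp : ∀ k, 1 ≤ k → k ≤ (n + 1) / 2 → 0 < p k)
    (hq : ∀ k, 1 ≤ k → k ≤ (n + 1) / 2 → 0 < q k)
    (hmesh : MeshConstraints ((n + 1) / 2) p q)
    (u : ℕ → ℕ → ℝ)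
    (hu : ∀ i j, 1 ≤ i → i ≤ n → 1 ≤ j → j ≤ n → LhOp n p q u i j ≤ 0) :
    ∀ i j, 1 ≤ i → i ≤ n → 1 ≤ j → j ≤ n →
      u i j ≤ max 0 ((boundarySet n).sup' (boundarySet_nonempty n) fun x => u x.1 x.2) := by
  intro i j hi hin hj hjn
  obtain ⟨x₀, hmax₀⟩ := exists_isGridMax n u
  obtain ⟨y, hmax, hy⟩ := exists_of_forall_exists_lt Prod.fst (Q := (· ∈ boundarySet n))
    (fun _ hx hxB => exists_isGridMax_lt hodd hp hq hmesh hu hx hxB) hmax₀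
  calc u i j ≤ u y.1 y.2 := hmax.le (by omega) (by omega)
    _ ≤ _ := le_sup' (fun x : ℕ × ℕ => u x.1 x.2) hy
    _ ≤ _ := le_max_right _ _

theorem Q2_discrete_maximum_principle
    (n : ℕ) (hodd : Odd n) (hn : 0 < n) (p q : ℕ → ℝ)
    (hp : ∀ k, 1 ≤ k → k ≤ (n + 1) / 2 → 0 < p k)
    (hq : ∀ k, 1 ≤ k → k ≤ (n + 1) / 2 → 0 < q k)
    (hmesh : MeshConstraints ((n + 1) / 2) p q)
    (u : ℕ → ℕ → ℝ)
    (hu : ∀ i j, 1 ≤ i → i ≤ n → 1 ≤ j → j ≤ n → LhOp n p q u i j ≤ 0) :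
    ∀ i j, 1 ≤ i → i ≤ n → 1 ≤ j → j ≤ n →
      u i j ≤ max 0 ((boundarySet n).sup' (boundarySet_nonempty n) fun x => u x.1 x.2) :=
  Q2_discrete_maximum_principle_general n hodd p q hp hq hmesh u hu
end
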